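/- arXiv:2605.25088 — 4 statements merged into one kernel-verified Lean document; each statement's English description precedes it below -/
import Mathlib

section
/- Fix r ≥ 1. The map sending (x₁,…,x_r) to the ordered pair (K_r(x₁,…,x_r), K_{r−1}(x₁,…,x_{r−1})) is injective on the set {(x₁,…,x_r) ∈ ℤ^r : x_i ≥ 2 for all i}. That is, if x₁,…,x_r and y₁,…,y_r are integers all ≥ 2 with K_r(x₁,…,x_r) = K_r(y₁,…,y_r) and K_{r−1}(x₁,…,x_{r−1}) = K_{r−1}(y₁,…,y_{r−1}), then x_i = y_i for all i. -/
/-- The continuant `K_i(x₁,…,x_i)`: `K₀ = 1`, `K₁ = x₁`, and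
`K_i = x_i · K_{i-1} − K_{i-2}` for `i ≥ 2`. -/
def contK (x : ℕ → ℤ) : ℕ → ℤ
  | 0 => 1
  | 1 => x 1
  | (n + 2) => x (n + 2) * contK x (n + 1) - contK x n

/-!
Since all entries are at least `2`, the continuants increase: `0 ≤ K_{r-2} < K_{r-1}`.
Hence `K_r = x_r K_{r-1} - K_{r-2}` is a division of `K_r` by `K_{r-1}` with a remainder in
`(-K_{r-1}, 0]`, so the pair `(K_r, K_{r-1})` determines `x_r` and `K_{r-2}`, and we recurse.
-/

theorem Int.eq_and_eq_of_mul_sub_eq_mul_sub {m q q' b c : ℤ} (hb : 0 ≤ b) (hbm : b < m)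
    (hc : 0 ≤ c) (hcm : c < m) (h : q * m - b = q' * m - c) : q = q' ∧ b = c := by
  have hdvd : m ∣ b - c := ⟨q - q', by linarith⟩
  have hbc : b - c = 0 :=
    Int.eq_zero_of_abs_lt_dvd hdvd (abs_sub_lt_iff.mpr ⟨by linarith, by linarith⟩)
  have hq : q * m = q' * m := by linarith
  exact ⟨mul_right_cancel₀ (by linarith : m ≠ 0) hq, by linarith⟩

theorem contK_nonneg_and_lt_succ (x : ℕ → ℤ) (n : ℕ) (hx : ∀ i, 1 ≤ i → i ≤ n + 1 → 2 ≤ x i) :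
    0 ≤ contK x n ∧ contK x n < contK x (n + 1) := by
  induction n with
  | zero =>
    have := hx 1 le_rfl le_rfl
    exact ⟨zero_le_one, by simp only [contK]; omega⟩
  | succ n ih =>
    obtain ⟨hpos, hlt⟩ := ih fun i hi1 hin => hx i hi1 (by omega)
    have hxn : 2 ≤ x (n + 2) := hx (n + 2) (by omega) le_rfl
    have hstep : contK x (n + 2) = x (n + 2) * contK x (n + 1) - contK x n := rfl
    refine ⟨by linarith, ?_⟩
    rw [hstep]
    nlinarith

theorem eq_and_contK_eq_of_contK_succ_succ_eq {x y : ℕ → ℤ} {n : ℕ}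
    (hx : ∀ i, 1 ≤ i → i ≤ n + 1 → 2 ≤ x i) (hy : ∀ i, 1 ≤ i → i ≤ n + 1 → 2 ≤ y i)
    (h₂ : contK x (n + 2) = contK y (n + 2)) (h₁ : contK x (n + 1) = contK y (n + 1)) :
    x (n + 2) = y (n + 2) ∧ contK x n = contK y n := by
  obtain ⟨hx₀, hx₁⟩ := contK_nonneg_and_lt_succ x n hx
  obtain ⟨hy₀, hy₁⟩ := contK_nonneg_and_lt_succ y n hy
  rw [h₁] at hx₁
  have h : x (n + 2) * contK y (n + 1) - contK x n = y (n + 2) * contK y (n + 1) - contK y n := by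
    simpa only [contK, h₁] using h₂
  exact Int.eq_and_eq_of_mul_sub_eq_mul_sub hx₀ hx₁ hy₀ hy₁ h

theorem eq_of_contK_succ_eq_of_contK_eq {x y : ℕ → ℤ} (n : ℕ)
    (hx : ∀ i, 1 ≤ i → i ≤ n → 2 ≤ x i) (hy : ∀ i, 1 ≤ i → i ≤ n → 2 ≤ y i)
    (h₁ : contK x (n + 1) = contK y (n + 1)) (h₀ : contK x n = contK y n) :
    ∀ i, 1 ≤ i → i ≤ n + 1 → x i = y i := by
  induction n with
  | zero =>
    intro i hi1 hi
    obtain rfl : i = 1 := by omega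
    exact h₁
  | succ n ih =>
    obtain ⟨hlast, hK⟩ := eq_and_contK_eq_of_contK_succ_succ_eq hx hy h₁ h₀
    intro i hi1 hi
    rcases Nat.lt_or_ge i (n + 2) with hlt | hge
    · exact ih (fun j hj1 hj => hx j hj1 (by omega)) (fun j hj1 hj => hy j hj1 (by omega)) h₀ hK
        i hi1 (by omega)
    · obtain rfl : i = n + 2 := by omega
      exact hlast

theorem continuant_pair_injective (r : ℕ) (hr : 1 ≤ r) (x y : ℕ → ℤ)
    (hx : ∀ i, 1 ≤ i → i ≤ r → 2 ≤ x i)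
    (hy : ∀ i, 1 ≤ i → i ≤ r → 2 ≤ y i)
    (h₁ : contK x r = contK y r)
    (h₂ : contK x (r - 1) = contK y (r - 1)) :
    ∀ i, 1 ≤ i → i ≤ r → x i = y i := by
  obtain ⟨n, rfl⟩ : ∃ n, r = n + 1 := ⟨r - 1, by omega⟩
  exact eq_of_contK_succ_eq_of_contK_eq n (fun i hi1 hi => hx i hi1 (by omega))
    (fun i hi1 hi => hy i hi1 (by omega)) h₁ h₂
end

section
/- Let s, t ≥ 1, and let A be an s×s integer matrix, E an s×t integer matrix, G a t×s integer matrix, and H a t×t integer matrix. Then the determinant of the (2s+t)×(2s+t) block matrix with block rows (A, 0, E), (0, A, E), (G, G, H) equals det(A) times the determinant of the (s+t)×(s+t) block matrix with block rows (A, E), (2G, H). -/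
/-- The block matrix with block rows `(A, 0, E)`, `(0, A, E)`, `(G, G, H)`. -/
def twoCopyBlock (s t : ℕ) (A : Matrix (Fin s) (Fin s) ℤ)
    (E : Matrix (Fin s) (Fin t) ℤ) (G : Matrix (Fin t) (Fin s) ℤ)
    (H : Matrix (Fin t) (Fin t) ℤ) :
    Matrix ((Fin s ⊕ Fin s) ⊕ Fin t) ((Fin s ⊕ Fin s) ⊕ Fin t) ℤ :=
  Matrix.fromBlocks (Matrix.fromBlocks A 0 0 A)
    (Matrix.of fun i j => E (Sum.elim id id i) j)
    (Matrix.of fun i j => G i (Sum.elim id id j)) H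

/-!
Subtracting the second block row from the first and then adding the first block column to the
second are unimodular operations; they turn the block rows `(A, 0, E)`, `(0, A, E)`, `(G, G, H)`
into `(A, 0, 0)`, `(0, A, E)`, `(G, 2G, H)`, and the first block row now splits off `det A`.
-/

namespace Matrix

variable {R m n : Type*} [CommRing R] [Fintype m] [DecidableEq m] [Fintype n] [DecidableEq n]

theorem det_fromBlocks_fromBlocks_zero_fromRows_zero (A D : Matrix m m R) (E : Matrix m n R)
    (G G' : Matrix n m R) (H : Matrix n n R) :
    (fromBlocks (fromBlocks A 0 0 D) (fromRows 0 E) (fromCols G G') H).det =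
      A.det * (fromBlocks D E G' H).det := by
  rw [← det_submatrix_equiv_self (Equiv.sumAssoc m m n).symm,
    ← det_fromBlocks_zero₁₂ A (fromRows 0 G)]
  congr 1
  ext (i | i | i) (j | j | j) <;> simp

theorem det_fromBlocks_two_copies (A : Matrix m m R) (E : Matrix m n R) (G : Matrix n m R)
    (H : Matrix n n R) :
    (fromBlocks (fromBlocks A 0 0 A) (fromRows E E) (fromCols G G) H).det =
      A.det * (fromBlocks A E ((2 : R) • G) H).det := by
  let L : Matrix ((m ⊕ m) ⊕ n) ((m ⊕ m) ⊕ n) R := fromBlocks (fromBlocks 1 (-1) 0 1) 0 0 1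
  let U : Matrix ((m ⊕ m) ⊕ n) ((m ⊕ m) ⊕ n) R := fromBlocks (fromBlocks 1 1 0 1) 0 0 1
  have hL : L.det = 1 := by simp [L]
  have hU : U.det = 1 := by simp [U]
  have hLMU : L * fromBlocks (fromBlocks A 0 0 A) (fromRows E E) (fromCols G G) H * U =
      fromBlocks (fromBlocks A 0 0 A) (fromRows 0 E) (fromCols G ((2 : R) • G)) H := by
    simp [L, U, fromBlocks_multiply, fromBlocks_mul_fromRows, fromCols_mul_fromBlocks, two_smul]
  rw [← det_fromBlocks_fromBlocks_zero_fromRows_zero A A E G, ← hLMU, det_mul, det_mul, hL, hU,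
    one_mul, mul_one]

end Matrix

open Matrix in
theorem twoCopyBlock_eq_fromBlocks (s t : ℕ) (A : Matrix (Fin s) (Fin s) ℤ)
    (E : Matrix (Fin s) (Fin t) ℤ) (G : Matrix (Fin t) (Fin s) ℤ) (H : Matrix (Fin t) (Fin t) ℤ) :
    twoCopyBlock s t A E G H = fromBlocks (fromBlocks A 0 0 A) (fromRows E E) (fromCols G G) H := by
  unfold twoCopyBlock
  congr 1
  · ext (i | i) j <;> rfl
  · ext i (j | j) <;> rfl

theorem two_copy_det_general (s t : ℕ)
    (A : Matrix (Fin s) (Fin s) ℤ) (E : Matrix (Fin s) (Fin t) ℤ)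
    (G : Matrix (Fin t) (Fin s) ℤ) (H : Matrix (Fin t) (Fin t) ℤ) :
    (twoCopyBlock s t A E G H).det =
      A.det * (Matrix.fromBlocks A E ((2 : ℤ) • G) H).det := by
  rw [twoCopyBlock_eq_fromBlocks, Matrix.det_fromBlocks_two_copies]

theorem two_copy_det (s t : ℕ) (hs : 1 ≤ s) (ht : 1 ≤ t)
    (A : Matrix (Fin s) (Fin s) ℤ) (E : Matrix (Fin s) (Fin t) ℤ)
    (G : Matrix (Fin t) (Fin s) ℤ) (H : Matrix (Fin t) (Fin t) ℤ) :
    (twoCopyBlock s t A E G H).det =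
      A.det * (Matrix.fromBlocks A E ((2 : ℤ) • G) H).det :=
  two_copy_det_general s t A E G H
end

section
/- Let s, t, u ≥ 1, and let A be an s×s integer matrix, B a t×t integer matrix, P an s×u integer matrix, Q a t×u integer matrix, and F a u×u integer matrix. Let M be the (2s+2t+u)×(2s+2t+u) block matrix with block rows (A,0,0,0,P), (0,A,0,0,P), (0,0,B,0,Q), (0,0,0,B,Q), (Pᵀ,Pᵀ,Qᵀ,Qᵀ,F), and let R be the (s+t+u)×(s+t+u) block matrix with block rows (B,0,Q), (0,A,P), (2Qᵀ,2Pᵀ,F). Then det(M) = det(A)·det(B)·det(R). -/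
/-- The block matrix with block rows `(A,0,0,0,P)`, `(0,A,0,0,P)`,
`(0,0,B,0,Q)`, `(0,0,0,B,Q)`, `(Pᵀ,Pᵀ,Qᵀ,Qᵀ,F)`. -/
def bigBlock (s t u : ℕ) (A : Matrix (Fin s) (Fin s) ℤ)
    (B : Matrix (Fin t) (Fin t) ℤ) (P : Matrix (Fin s) (Fin u) ℤ)
    (Q : Matrix (Fin t) (Fin u) ℤ) (F : Matrix (Fin u) (Fin u) ℤ) :
    Matrix ((Fin s ⊕ Fin s) ⊕ (Fin t ⊕ Fin t) ⊕ Fin u)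
      ((Fin s ⊕ Fin s) ⊕ (Fin t ⊕ Fin t) ⊕ Fin u) ℤ :=
  Matrix.of fun i j =>
    match i, j with
    | .inl (.inl a), .inl (.inl b) => A a b
    | .inl (.inl a), .inr (.inr b) => P a b
    | .inl (.inr a), .inl (.inr b) => A a b
    | .inl (.inr a), .inr (.inr b) => P a b
    | .inr (.inl (.inl a)), .inr (.inl (.inl b)) => B a b
    | .inr (.inl (.inl a)), .inr (.inr b) => Q a b
    | .inr (.inl (.inr a)), .inr (.inl (.inr b)) => B a b
    | .inr (.inl (.inr a)), .inr (.inr b) => Q a b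
    | .inr (.inr a), .inl (.inl b) => P b a
    | .inr (.inr a), .inl (.inr b) => P b a
    | .inr (.inr a), .inr (.inl (.inl b)) => Q b a
    | .inr (.inr a), .inr (.inl (.inr b)) => Q b a
    | .inr (.inr a), .inr (.inr b) => F a b
    | _, _ => 0

/-- The block matrix with block rows `(B,0,Q)`, `(0,A,P)`, `(2Qᵀ,2Pᵀ,F)`. -/
def smallBlock (s t u : ℕ) (A : Matrix (Fin s) (Fin s) ℤ)
    (B : Matrix (Fin t) (Fin t) ℤ) (P : Matrix (Fin s) (Fin u) ℤ)
    (Q : Matrix (Fin t) (Fin u) ℤ) (F : Matrix (Fin u) (Fin u) ℤ) :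
    Matrix (Fin t ⊕ Fin s ⊕ Fin u) (Fin t ⊕ Fin s ⊕ Fin u) ℤ :=
  Matrix.of fun i j =>
    match i, j with
    | .inl a, .inl b => B a b
    | .inl a, .inr (.inr b) => Q a b
    | .inr (.inl a), .inr (.inl b) => A a b
    | .inr (.inl a), .inr (.inr b) => P a b
    | .inr (.inr a), .inl b => 2 * Q b a
    | .inr (.inr a), .inr (.inl b) => 2 * P b a
    | .inr (.inr a), .inr (.inr b) => F a b
    | _, _ => 0


/-! Subtracting the second copy of a doubled diagonal block from the first (rows) and adding the
first copy to the second (columns) are unimodular operations; they split off one copy of the block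
and double the coupling block below it (`det_doubleBlock`). Doing this once for the `A`-pair of
`bigBlock` and, after reordering the indices, once for the `B`-pair leaves `smallBlock`. -/

namespace Matrix

theorem smul_fromRows {α R m₁ m₂ n : Type*} [SMul α R] (c : α) (A₁ : Matrix m₁ n R)
    (A₂ : Matrix m₂ n R) : c • fromRows A₁ A₂ = fromRows (c • A₁) (c • A₂) := by
  ext (i | i) j <;> rfl

def doubleBlock {R m n : Type*} [Zero R] (A : Matrix m m R) (P : Matrix m n R)
    (Z : Matrix n m R) (W : Matrix n n R) : Matrix ((m ⊕ m) ⊕ n) ((m ⊕ m) ⊕ n) R :=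
  fromBlocks (fromBlocks A 0 0 A) (fromRows P P) (fromCols Z Z) W

variable {R m n : Type*} [CommRing R] [Fintype m] [DecidableEq m] [Fintype n] [DecidableEq n]

theorem det_doubleBlock (A : Matrix m m R) (P : Matrix m n R) (Z : Matrix n m R)
    (W : Matrix n n R) :
    (doubleBlock A P Z W).det = A.det * (fromBlocks A P (2 • Z) W).det := by
  set L : Matrix ((m ⊕ m) ⊕ n) ((m ⊕ m) ⊕ n) R := fromBlocks (fromBlocks 1 (-1) 0 1) 0 0 1
  set E : Matrix ((m ⊕ m) ⊕ n) ((m ⊕ m) ⊕ n) R := fromBlocks (fromBlocks 1 1 0 1) 0 0 1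
  have hL : L.det = 1 := by simp [L]
  have hE : E.det = 1 := by simp [E]
  have hLME : (L * doubleBlock A P Z W * E).submatrix (Equiv.sumAssoc m m n).symm
      (Equiv.sumAssoc m m n).symm = fromBlocks A 0 (fromRows 0 Z) (fromBlocks A P (2 • Z) W) := by
    ext (i | i | i) (j | j | j) <;>
      simp [L, E, doubleBlock, mul_apply, Fintype.sum_sum_type, one_apply, two_smul]
  calc (doubleBlock A P Z W).det
      = (L * doubleBlock A P Z W * E).det := by rw [det_mul, det_mul, hL, hE, one_mul, mul_one]
    _ = A.det * (fromBlocks A P (2 • Z) W).det := by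
      rw [← det_submatrix_equiv_self (Equiv.sumAssoc m m n).symm, hLME, det_fromBlocks_zero₁₂]

variable {k : Type*} [Fintype k] [DecidableEq k]

theorem det_fromBlocks_doubleBlock (A : Matrix m m R) (P : Matrix m n R) (Z : Matrix n m R)
    (B : Matrix k k R) (Q : Matrix k n R) (Y : Matrix n k R) (F : Matrix n n R) :
    (fromBlocks A (fromCols 0 P) (fromRows 0 Z) (doubleBlock B Q Y F)).det =
      B.det * (fromBlocks B (fromCols 0 Q) (2 • fromRows 0 Y) (fromBlocks A P Z F)).det := by
  let e : (k ⊕ k) ⊕ (m ⊕ n) ≃ m ⊕ ((k ⊕ k) ⊕ n) :=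
    ((Equiv.sumAssoc _ _ _).symm.trans (Equiv.sumCongr (Equiv.sumComm _ _) (Equiv.refl _))).trans
      (Equiv.sumAssoc _ _ _)
  have he : (fromBlocks A (fromCols 0 P) (fromRows 0 Z) (doubleBlock B Q Y F)).submatrix e e =
      doubleBlock B (fromCols 0 Q) (fromRows 0 Y) (fromBlocks A P Z F) := by
    ext ((i | i) | i | i) ((j | j) | j | j) <;> simp [e, doubleBlock]
  rw [← det_submatrix_equiv_self e, he, det_doubleBlock]

end Matrix

open Matrix

theorem bigBlock_eq_doubleBlock (s t u : ℕ) (A : Matrix (Fin s) (Fin s) ℤ)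
    (B : Matrix (Fin t) (Fin t) ℤ) (P : Matrix (Fin s) (Fin u) ℤ)
    (Q : Matrix (Fin t) (Fin u) ℤ) (F : Matrix (Fin u) (Fin u) ℤ) :
    bigBlock s t u A B P Q F =
      doubleBlock A (fromCols 0 P) (fromRows 0 Pᵀ) (doubleBlock B Q Qᵀ F) := by
  ext ((i | i) | (i | i) | i) ((j | j) | (j | j) | j) <;> rfl

theorem smallBlock_eq_fromBlocks (s t u : ℕ) (A : Matrix (Fin s) (Fin s) ℤ)
    (B : Matrix (Fin t) (Fin t) ℤ) (P : Matrix (Fin s) (Fin u) ℤ)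
    (Q : Matrix (Fin t) (Fin u) ℤ) (F : Matrix (Fin u) (Fin u) ℤ) :
    smallBlock s t u A B P Q F =
      fromBlocks B (fromCols 0 Q) (2 • fromRows 0 Qᵀ) (fromBlocks A P (2 • Pᵀ) F) := by
  ext (i | i | i) (j | j | j) <;> simp [smallBlock]

theorem double_two_copy_det_general (s t u : ℕ)
    (A : Matrix (Fin s) (Fin s) ℤ) (B : Matrix (Fin t) (Fin t) ℤ)
    (P : Matrix (Fin s) (Fin u) ℤ) (Q : Matrix (Fin t) (Fin u) ℤ)
    (F : Matrix (Fin u) (Fin u) ℤ) :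
    (bigBlock s t u A B P Q F).det =
      A.det * B.det * (smallBlock s t u A B P Q F).det := by
  rw [bigBlock_eq_doubleBlock, det_doubleBlock, smul_fromRows, smul_zero,
    det_fromBlocks_doubleBlock, smallBlock_eq_fromBlocks, mul_assoc]

theorem double_two_copy_det (s t u : ℕ) (hs : 1 ≤ s) (ht : 1 ≤ t) (hu : 1 ≤ u)
    (A : Matrix (Fin s) (Fin s) ℤ) (B : Matrix (Fin t) (Fin t) ℤ)
    (P : Matrix (Fin s) (Fin u) ℤ) (Q : Matrix (Fin t) (Fin u) ℤ)
    (F : Matrix (Fin u) (Fin u) ℤ) :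
    (bigBlock s t u A B P Q F).det =
      A.det * B.det * (smallBlock s t u A B P Q F).det :=
  double_two_copy_det_general s t u A B P Q F
end

section
/- Fix integers m ≥ 3 and q ≥ 1. For every positive integer D, the number of words w = (w₁,…,w_m) ∈ {2,3,…,q+1}^m with D_w = D is at most σ₀(D), the number of positive divisors of D. -/
/-- Extension of a word `w = (w₁,…,w_m)` (indexed by `Fin m`) to a sequence
indexed from `1`: position `j ∈ {1,…,m}` has value `w_j`. -/
def wext (m : ℕ) (w : Fin m → ℕ) : ℕ → ℤ :=
  fun j => if h : j - 1 < m then (w ⟨j - 1, h⟩ : ℤ) else 2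

/-- `D_w = K_m(w₁,…,w_m) · K_{m−1}(w₁,…,w_{m−1})`. -/
def Dword (m : ℕ) (w : Fin m → ℕ) : ℤ :=
  contK (wext m w) m * contK (wext m w) (m - 1)

/-!
The map `w ↦ K_{m-1}(w)` sends the fiber over `D` to the divisors of `D = K_m · K_{m-1}`, and it is
injective there: once `K_m` and `K_{m-1}` are known, `K_m = w_m K_{m-1} - K_{m-2}` with
`0 < K_{m-2} < K_{m-1}` determines `w_m` and `K_{m-2}`, and one descends to the shorter word.
-/

section Continuant

variable {x y : ℕ → ℤ}

theorem contK_pos_and_lt_succ :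
    ∀ n, (∀ j, 1 ≤ j → j ≤ n + 1 → 2 ≤ x j) → 0 < contK x n ∧ contK x n < contK x (n + 1)
  | 0, hx => by
    have := hx 1 le_rfl le_rfl
    simp only [contK]
    omega
  | n + 1, hx => by
    obtain ⟨hpos, hlt⟩ := contK_pos_and_lt_succ n fun j hj hj' => hx j hj (by omega)
    have hx₂ := hx (n + 2) (by omega) le_rfl
    have hrec : contK x (n + 2) = x (n + 2) * contK x (n + 1) - contK x n := rfl
    constructor <;> nlinarith

theorem contK_pos {n : ℕ} (hx : ∀ j, 1 ≤ j → j ≤ n → 2 ≤ x j) : 0 < contK x n := by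
  cases n with
  | zero => exact one_pos
  | succ n =>
    obtain ⟨hpos, hlt⟩ := contK_pos_and_lt_succ n hx
    exact hpos.trans hlt

theorem eq_and_eq_of_mul_sub_eq_mul_sub {a b K r s : ℤ} (hr : 0 ≤ r) (hrK : r < K) (hs : 0 ≤ s)
    (hsK : s < K) (h : a * K - r = b * K - s) : a = b ∧ r = s := by
  have hab : a = b := by
    rcases lt_trichotomy a b with hab | hab | hab
    · nlinarith
    · exact hab
    · nlinarith
  subst hab
  exact ⟨rfl, by linarith⟩

theorem eq_of_contK_eq_of_contK_succ_eq :
    ∀ n, (∀ j, 1 ≤ j → j ≤ n + 1 → 2 ≤ x j) → (∀ j, 1 ≤ j → j ≤ n + 1 → 2 ≤ y j) →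
      contK x (n + 1) = contK y (n + 1) → contK x n = contK y n →
      ∀ j, 1 ≤ j → j ≤ n + 1 → x j = y j
  | 0, _, _, h₁, _, j, hj₁, hj₂ => by
    obtain rfl : j = 1 := by omega
    simpa only [contK] using h₁
  | n + 1, hx, hy, h₂, h₁, j, hj₁, hj₂ => by
    have hxn := contK_pos_and_lt_succ n fun j hj hj' => hx j hj (by omega)
    have hyn := contK_pos_and_lt_succ n fun j hj hj' => hy j hj (by omega)
    have hrec : x (n + 2) * contK x (n + 1) - contK x n =
        y (n + 2) * contK y (n + 1) - contK y n := h₂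
    rw [h₁] at hrec
    obtain ⟨hlast, h₀⟩ := eq_and_eq_of_mul_sub_eq_mul_sub hxn.1.le (h₁ ▸ hxn.2) hyn.1.le hyn.2 hrec
    rcases Nat.lt_or_ge j (n + 2) with hj | hj
    · exact eq_of_contK_eq_of_contK_succ_eq n (fun j hj hj' => hx j hj (by omega))
        (fun j hj hj' => hy j hj (by omega)) h₁ h₀ j hj₁ (by omega)
    · obtain rfl : j = n + 2 := by omega
      exact hlast

end Continuant

section Word

variable {m : ℕ} {w w' : Fin m → ℕ}

theorem wext_succ (w : Fin m → ℕ) (i : Fin m) : wext m w (i + 1) = w i := by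
  simp [wext]

theorem two_le_wext (hw : ∀ i, 2 ≤ w i) (j : ℕ) : 2 ≤ wext m w j := by
  unfold wext
  split_ifs
  · exact_mod_cast hw _
  · exact le_rfl

theorem contK_wext_pos (hw : ∀ i, 2 ≤ w i) (n : ℕ) : 0 < contK (wext m w) n :=
  contK_pos fun j _ _ => two_le_wext hw j

theorem eq_of_contK_wext_eq (hw : ∀ i, 2 ≤ w i) (hw' : ∀ i, 2 ≤ w' i)
    (hlast : contK (wext m w) m = contK (wext m w') m)
    (hprev : contK (wext m w) (m - 1) = contK (wext m w') (m - 1)) : w = w' := by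
  cases m with
  | zero => exact Subsingleton.elim _ _
  | succ n =>
    funext i
    have := eq_of_contK_eq_of_contK_succ_eq n (fun j _ _ => two_le_wext hw j)
      (fun j _ _ => two_le_wext hw' j) hlast hprev (i + 1) (by omega) (by omega)
    rw [wext_succ, wext_succ] at this
    exact_mod_cast this

end Word

theorem fiber_card_le_divisor_count_general (m q : ℕ)
    (D : ℕ) :
    Set.ncard {w : Fin m → ℕ |
        (∀ i, 2 ≤ w i ∧ w i ≤ q + 1) ∧ Dword m w = (D : ℤ)} ≤
      (Nat.divisors D).card := by
  set S := {w : Fin m → ℕ | (∀ i, 2 ≤ w i ∧ w i ≤ q + 1) ∧ Dword m w = (D : ℤ)}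
  let prev : (Fin m → ℕ) → ℕ := fun w => (contK (wext m w) (m - 1)).toNat
  have two_le {w} (hw : w ∈ S) : ∀ i, 2 ≤ w i := fun i => (hw.1 i).1
  have prev_cast {w} (hw : w ∈ S) : (prev w : ℤ) = contK (wext m w) (m - 1) :=
    Int.toNat_of_nonneg (contK_wext_pos (two_le hw) _).le
  have maps : Set.MapsTo prev S (Nat.divisors D) := by
    intro w hw
    have hDw : contK (wext m w) m * contK (wext m w) (m - 1) = D := hw.2
    have hDpos : (0 : ℤ) < D :=
      hDw ▸ mul_pos (contK_wext_pos (two_le hw) _) (contK_wext_pos (two_le hw) _)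
    refine Nat.mem_divisors.2 ⟨Int.natCast_dvd_natCast.1 ?_, by omega⟩
    rw [prev_cast hw, ← hDw]
    exact Dvd.intro_left _ rfl
  have inj : Set.InjOn prev S := by
    intro w hw w' hw' h
    have hprev : contK (wext m w) (m - 1) = contK (wext m w') (m - 1) := by
      rw [← prev_cast hw, ← prev_cast hw', h]
    have hDword : Dword m w = Dword m w' := hw.2.trans hw'.2.symm
    unfold Dword at hDword
    rw [hprev] at hDword
    exact eq_of_contK_wext_eq (two_le hw) (two_le hw')
      (mul_right_cancel₀ (contK_wext_pos (two_le hw') _).ne' hDword) hprev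
  exact (Set.ncard_le_ncard_of_injOn prev maps inj (Set.toFinite _)).trans_eq
    (Set.ncard_coe_finset _)

theorem fiber_card_le_divisor_count (m q : ℕ) (hm : 3 ≤ m) (hq : 1 ≤ q)
    (D : ℕ) (hD : 0 < D) :
    Set.ncard {w : Fin m → ℕ |
        (∀ i, 2 ≤ w i ∧ w i ≤ q + 1) ∧ Dword m w = (D : ℤ)} ≤
      (Nat.divisors D).card :=
  fiber_card_le_divisor_count_general m q D
end
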